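/- arXiv:1104.4584 — 2 statements merged into one kernel-verified Lean document; each statement's English description precedes it below -/
import Mathlib

section
/- In the field ℚ(q) of rational functions in an indeterminate q, for integers b ≥ 0 and k ≥ 1: T_k(q^b, q) = Σ_{i=0}^{k−1} (q^{i(2k+1)} / (q; q)_b) · [b choose i]_{q^2} · Σ_{j=−(k−i)}^{k−i} (−q)^{j^2} + Σ_{i=0}^{b−1} ((q; q)_i / (q; q)_b) · q^{k(2k+2i+1)} · [b−i−1 choose k−1]_{q^2}. -/
/-!
Write `t = q^b` and `S_m = ∑_{|j| ≤ m} (-q)^(j²)`. Both sides satisfy the three-term recurrence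
`f (k+2) = (1 - q^(2k+3)) f (k+1) + t² q^(2k+3) f k` and they agree at `k = 1`, and also at
`k = 0` once the second sum of the right-hand side is given its natural value there. For `T`
the recurrence comes from comparing its defining sums at `k+1` and `k+2`. For the right-hand
side, `q²`-Pascal and the telescoping `S_(m+1) = S_m + 2 (-q)^((m+1)²)` turn the recurrence
defect of the first sum into an alternating sum of `q²`-binomials. The total defect then
vanishes by induction on `b`, because the second sum and the alternating sum obey Pascal-type
recursions in `b`.
-/

/-- The polynomials `T_k(t,q)` defined by `T_0 = 1` and, for `k ≥ 1`,
`T_k = T_{k-1} + (1+t)(-q)^{k²} + (1-t²) ∑_{i=1}^{k-1} (-q)^{k²-i²} T_{i-1}`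
(below the sum is reindexed by `i ↦ i+1`). -/
def T {R : Type*} [CommRing R] (t q : R) : ℕ → R
  | 0 => 1
  | (k+1) => T t q k + (1 + t) * (-q) ^ ((k+1)^2) +
      (1 - t^2) * ∑ i ∈ (Finset.range k).attach,
        (-q) ^ ((k+1)^2 - (i.1+1)^2) * T t q i.1
decreasing_by
  · exact Nat.lt_succ_self k
  · exact Nat.lt_succ_of_lt (Finset.mem_range.mp i.2)

/-- `f n h` with `f 0 0 = 1`, `f 0 h = 0` for `h ≥ 1`, `f n h = 0` for `h < 0`, and
`f n h = (1-q^h) f (n-1) (h-1) + (1-t q^{h+1}) f (n-1) (h+1)`; at `h = 0` the first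
term vanishes since `1 - q^0 = 0`. -/
def f {R : Type*} [CommRing R] (t q : R) : ℕ → ℕ → R
  | 0, h => if h = 0 then 1 else 0
  | (n+1), 0 => (1 - t * q) * f t q n 1
  | (n+1), (h+1) => (1 - q^(h+1)) * f t q n h + (1 - t * q^(h+2)) * f t q n (h+2)

/-- `Ẽ_n(t,q) = f(2n,0)`, which is `(1-q)^{2n}` times the `(t,q)`-Euler number. -/
def Etilde {R : Type*} [CommRing R] (t q : R) (n : ℕ) : R := f t q (2*n) 0

/-- Binomial coefficient with integer lower index, `0` when the lower index is negative. -/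
def binom (n : ℕ) (m : ℤ) : ℤ := if 0 ≤ m then (n.choose m.toNat : ℤ) else 0

/-- q-Pochhammer symbol `(a;q)_n = ∏_{j=0}^{n-1} (1 - a q^j)`. -/
def qPoch {K : Type*} [CommRing K] (a q : K) (n : ℕ) : K :=
  ∏ j ∈ Finset.range n, (1 - a * q ^ j)

/-- Gaussian binomial coefficient `[n choose k]_q = (q;q)_n / ((q;q)_k (q;q)_{n-k})`,
equal to `0` whenever `k < 0` or `k > n`. -/
def gauss {K : Type*} [Field K] (q : K) (n k : ℤ) : K :=
  if 0 ≤ k ∧ k ≤ n then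
    qPoch q q n.toNat / (qPoch q q k.toNat * qPoch q q (n - k).toNat)
  else 0

/-- Number of distinct (positive) part sizes of the partition encoded by an
antitone function `Fin m → Fin (n+1)`. -/
def distCard {m n : ℕ} (g : Fin m → Fin (n+1)) : ℕ :=
  ((Finset.univ.image fun i => ((g i : ℕ))).erase 0).card

/-- `∑_{λ ⊆ B(m,n)} x^{dist(λ)} q^{|λ|}`: partitions in the `m × n` box are encoded
as antitone functions `Fin m → Fin (n+1)`. -/
def boxSum {R : Type*} [CommRing R] (x q : R) (m n : ℕ) : R :=
  ∑ g ∈ Finset.univ.filter (fun g : Fin m → Fin (n+1) => ∀ i j : Fin m, i ≤ j → g j ≤ g i),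
    x ^ distCard g * q ^ (∑ i, (g i : ℕ))

/-- The indeterminate `q` in the field `ℚ(q)` of rational functions. -/
noncomputable def Xq : RatFunc ℚ := RatFunc.X


open Finset

section TRecurrence

variable {R : Type*} [CommRing R]

@[simp] theorem T_zero (t q : R) : T t q 0 = 1 := by rw [T]

theorem T_succ (t q : R) (k : ℕ) :
    T t q (k + 1) = T t q k + (1 + t) * (-q) ^ ((k + 1) ^ 2) +
      (1 - t ^ 2) * ∑ i ∈ range k, (-q) ^ ((k + 1) ^ 2 - (i + 1) ^ 2) * T t q i := by
  rw [T, sum_attach (range k) fun i => (-q) ^ ((k + 1) ^ 2 - (i + 1) ^ 2) * T t q i]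

theorem T_add_two (t q : R) (k : ℕ) :
    T t q (k + 2)
      = (1 - q ^ (2 * k + 3)) * T t q (k + 1) + t ^ 2 * q ^ (2 * k + 3) * T t q k := by
  have hsum : ∑ i ∈ range (k + 1), (-q) ^ ((k + 2) ^ 2 - (i + 1) ^ 2) * T t q i
      = (-q) ^ (2 * k + 3)
        * ∑ i ∈ range (k + 1), (-q) ^ ((k + 1) ^ 2 - (i + 1) ^ 2) * T t q i := by
    rw [mul_sum]
    refine sum_congr rfl fun i hi => ?_
    rw [mem_range] at hi
    have hik : (i + 1) ^ 2 ≤ (k + 1) ^ 2 := Nat.pow_le_pow_left (by omega) 2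
    have hk : (k + 2) ^ 2 = (k + 1) ^ 2 + (2 * k + 3) := by ring
    rw [← mul_assoc, ← pow_add]
    congr 2
    omega
  have hsq : (-q) ^ ((k + 2) ^ 2) = (-q) ^ (2 * k + 3) * (-q) ^ ((k + 1) ^ 2) := by
    rw [← pow_add]; ring_nf
  have hodd : (-q) ^ (2 * k + 3) = -q ^ (2 * k + 3) := Odd.neg_pow ⟨k + 1, by ring⟩ q
  rw [sum_range_succ (fun i => (-q) ^ ((k + 1) ^ 2 - (i + 1) ^ 2) * T t q i), Nat.sub_self,
    pow_zero, one_mul] at hsum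
  rw [T_succ t q (k + 1), hsum, hsq, hodd]
  linear_combination q ^ (2 * k + 3) * T_succ t q k

end TRecurrence

section GaussianBinomial

variable {R : Type*} [CommRing R] {K : Type*} [Field K]

def qbinom (Q : R) : ℕ → ℕ → R
  | _, 0 => 1
  | 0, _ + 1 => 0
  | n + 1, m + 1 => qbinom Q n m + Q ^ (m + 1) * qbinom Q n (m + 1)

@[simp] theorem qbinom_zero_right (Q : R) (n : ℕ) : qbinom Q n 0 = 1 := by cases n <;> rfl

theorem qbinom_succ_succ (Q : R) (n m : ℕ) :
    qbinom Q (n + 1) (m + 1) = qbinom Q n m + Q ^ (m + 1) * qbinom Q n (m + 1) := rfl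

theorem qbinom_of_lt (Q : R) {n m : ℕ} (h : n < m) : qbinom Q n m = 0 := by
  induction n generalizing m with
  | zero => obtain ⟨m, rfl⟩ := Nat.exists_eq_succ_of_ne_zero h.ne'; rfl
  | succ n ih =>
    obtain ⟨m, rfl⟩ := Nat.exists_eq_succ_of_ne_zero (by omega : m ≠ 0)
    rw [qbinom_succ_succ, ih (by omega), ih (by omega), mul_zero, add_zero]

@[simp] theorem qbinom_self (Q : R) (n : ℕ) : qbinom Q n n = 1 := by
  induction n with
  | zero => rfl
  | succ n ih => rw [qbinom_succ_succ, ih, qbinom_of_lt Q n.lt_succ_self, mul_zero, add_zero]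

theorem qPoch_self_succ (Q : R) (n : ℕ) :
    qPoch Q Q (n + 1) = qPoch Q Q n * (1 - Q ^ (n + 1)) := by
  rw [qPoch, prod_range_succ, ← pow_succ']; rfl

theorem qbinom_mul_qPoch (Q : R) {n m : ℕ} (h : m ≤ n) :
    qbinom Q n m * (qPoch Q Q m * qPoch Q Q (n - m)) = qPoch Q Q n := by
  induction n generalizing m with
  | zero =>
    obtain rfl : m = 0 := Nat.le_zero.mp h
    simp [qPoch]
  | succ n ih =>
    rcases m with _ | m
    · simp [qPoch]
    rw [qbinom_succ_succ, qPoch_self_succ, qPoch_self_succ]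
    rcases Nat.lt_or_ge m n with hmn | hmn
    · have h₁ := ih hmn.le
      have h₂ := ih (Nat.succ_le_of_lt hmn)
      have e : n - m = n - (m + 1) + 1 := by omega
      have hpow : Q ^ (m + 1) * Q ^ (n - m) = Q ^ (n + 1) := by rw [← pow_add]; congr 1; omega
      rw [e, qPoch_self_succ, ← e] at h₁
      rw [qPoch_self_succ] at h₂
      rw [show n + 1 - (m + 1) = n - m by omega, e, qPoch_self_succ, ← e]
      linear_combination (1 - Q ^ (m + 1)) * h₁ + Q ^ (m + 1) * (1 - Q ^ (n - m)) * h₂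
        - qPoch Q Q n * hpow
    · obtain rfl : m = n := by omega
      have h₁ := ih (le_refl m)
      rw [Nat.sub_self] at h₁
      rw [qbinom_of_lt Q m.lt_succ_self, Nat.sub_self]
      linear_combination (1 - Q ^ (m + 1)) * h₁

theorem qPoch_self_ne_zero {Q : K} (hQ : ¬IsOfFinOrder Q) (n : ℕ) : qPoch Q Q n ≠ 0 := by
  refine prod_ne_zero_iff.mpr fun j _ h =>
    hQ (isOfFinOrder_iff_pow_eq_one.mpr ⟨j + 1, j.succ_pos, ?_⟩)
  rw [pow_succ']
  exact (sub_eq_zero.mp h).symm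

theorem not_isOfFinOrder_sq {M : Type*} [Monoid M] {q : M} (hq : ¬IsOfFinOrder q) :
    ¬IsOfFinOrder (q ^ 2) :=
  fun h => hq (h.of_pow two_ne_zero)

theorem gauss_natCast {Q : K} (hQ : ¬IsOfFinOrder Q) (n m : ℕ) :
    gauss Q n m = qbinom Q n m := by
  unfold gauss
  by_cases h : m ≤ n
  · rw [if_pos ⟨m.cast_nonneg, by exact_mod_cast h⟩, ← Nat.cast_sub h, Int.toNat_natCast,
      Int.toNat_natCast, Int.toNat_natCast, eq_comm]
    exact eq_div_of_mul_eq (mul_ne_zero (qPoch_self_ne_zero hQ _) (qPoch_self_ne_zero hQ _))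
      (qbinom_mul_qPoch Q h)
  · rw [if_neg (by omega), qbinom_of_lt Q (by omega)]

theorem one_sub_pow_mul_qbinom {Q : K} (hQ : ¬IsOfFinOrder Q) (n m : ℕ) :
    (1 - Q ^ (m + 1)) * qbinom Q n (m + 1) = (1 - Q ^ (n - m)) * qbinom Q n m := by
  rcases lt_trichotomy m n with h | rfl | h
  · refine mul_right_cancel₀ (mul_ne_zero (qPoch_self_ne_zero hQ m)
      (qPoch_self_ne_zero hQ (n - (m + 1)))) ?_
    have h₁ := qbinom_mul_qPoch Q h.le
    have h₂ := qbinom_mul_qPoch Q (Nat.succ_le_of_lt h)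
    rw [show n - m = n - (m + 1) + 1 by omega, qPoch_self_succ] at h₁
    rw [qPoch_self_succ] at h₂
    rw [show n - m = n - (m + 1) + 1 by omega]
    linear_combination h₂ - h₁
  · rw [qbinom_of_lt Q m.lt_succ_self, Nat.sub_self]; ring
  · rw [qbinom_of_lt Q (by omega : n < m + 1), qbinom_of_lt Q h]; ring

theorem qbinom_succ_succ' {Q : K} (hQ : ¬IsOfFinOrder Q) (n m : ℕ) :
    qbinom Q (n + 1) (m + 1) = qbinom Q n (m + 1) + Q ^ (n - m) * qbinom Q n m := by
  linear_combination qbinom_succ_succ Q n m - one_sub_pow_mul_qbinom hQ n m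

end GaussianBinomial

section ThetaSums

variable {R : Type*} [CommRing R]

noncomputable def thetaSum (q : R) (m : ℕ) : R :=
  ∑ j ∈ Icc (-(m : ℤ)) m, (-q) ^ (j ^ 2).toNat

@[simp] theorem thetaSum_zero (q : R) : thetaSum q 0 = 1 := by simp [thetaSum]

theorem thetaSum_succ (q : R) (m : ℕ) :
    thetaSum q (m + 1) = thetaSum q m + 2 * (-q) ^ ((m + 1) ^ 2) := by
  have hIcc : Icc (-((m + 1 : ℕ) : ℤ)) ((m + 1 : ℕ) : ℤ)
      = insert (-((m : ℤ) + 1)) (insert ((m : ℤ) + 1) (Icc (-(m : ℤ)) m)) := by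
    ext x; simp only [mem_Icc, mem_insert]; omega
  have hsq : ∀ x : ℤ, x ^ 2 = (m + 1 : ℤ) ^ 2 → (x ^ 2).toNat = (m + 1) ^ 2 := by
    intro x hx; rw [hx]; exact_mod_cast Int.toNat_natCast ((m + 1) ^ 2)
  unfold thetaSum
  rw [hIcc, sum_insert (by simp only [mem_insert, mem_Icc]; omega),
    sum_insert (by simp only [mem_Icc]; omega), hsq _ (by ring), hsq _ rfl]
  ring

theorem sum_mul_thetaSum_succ_sub (q : R) (d : ℕ → R) (m : ℕ) :
    ∑ i ∈ range (m + 1), d i * thetaSum q (m + 1 - i)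
        - ∑ i ∈ range m, d i * thetaSum q (m - i)
      = d m + 2 * ∑ i ∈ range (m + 1), d i * (-q) ^ ((m + 1 - i) ^ 2) := by
  have hterm : ∀ i ∈ range (m + 1), d i * thetaSum q (m + 1 - i)
      = d i * thetaSum q (m - i) + 2 * (d i * (-q) ^ ((m + 1 - i) ^ 2)) := by
    intro i hi
    rw [show m + 1 - i = m - i + 1 by rw [mem_range] at hi; omega, thetaSum_succ]
    ring
  rw [sum_congr rfl hterm, sum_add_distrib, sum_range_succ (fun i => d i * thetaSum q (m - i)),
    Nat.sub_self, thetaSum_zero, ← mul_sum]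
  ring

end ThetaSums

section Convolution

variable {R : Type*} [CommRing R]

theorem sum_range_add_two_sub_of_coeff (S a b c d : ℕ → R) (x y : R) (k : ℕ)
    (h₀ : a 0 = d 0) (h₁ : a 1 = x * b 0 + d 1 - d 0)
    (h : ∀ i, a (i + 2) = x * b (i + 1) + y * c i + d (i + 2) - d (i + 1)) :
    ∑ i ∈ range (k + 2), a i * S (k + 2 - i) - x * ∑ i ∈ range (k + 1), b i * S (k + 1 - i)
      - y * ∑ i ∈ range k, c i * S (k - i)
      = ∑ i ∈ range (k + 2), d i * S (k + 2 - i)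
        - ∑ i ∈ range (k + 1), d i * S (k + 1 - i) := by
  simp only [sum_range_succ' _ (k + 1), sum_range_succ' _ k, Nat.add_sub_add_right, zero_add,
    Nat.sub_zero, show k + 2 - 1 = k + 1 from rfl, h, h₀, h₁]
  simp only [add_mul, sub_mul, mul_add, sum_add_distrib, sum_sub_distrib, mul_sum, mul_assoc]
  ring

end Convolution

section MainSum

variable {R : Type*} [CommRing R] {K : Type*} [Field K]

noncomputable def mainSum (q : R) (b k : ℕ) : R :=
  ∑ i ∈ range k, q ^ (i * (2 * k + 1)) * qbinom (q ^ 2) b i * thetaSum q (k - i)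

def altSum (q : R) (b k : ℕ) : R :=
  ∑ i ∈ range k, (-1) ^ i * q ^ (i ^ 2 - i) * qbinom (q ^ 2) (b + 1) i

theorem pow_mul_qbinom_add_two {q : K} (hq : ¬IsOfFinOrder q) (b k i : ℕ) :
    q ^ ((i + 2) * (2 * (k + 2) + 1)) * qbinom (q ^ 2) b (i + 2)
      = (1 - q ^ (2 * k + 3)) * (q ^ ((i + 1) * (2 * (k + 1) + 1)) * qbinom (q ^ 2) b (i + 1))
        + q ^ (2 * b + 2 * k + 3) * (q ^ (i * (2 * k + 1)) * qbinom (q ^ 2) b i)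
        + q ^ ((i + 2) * (2 * k + 3)) * qbinom (q ^ 2) (b + 1) (i + 2)
        - q ^ ((i + 1) * (2 * k + 3)) * qbinom (q ^ 2) (b + 1) (i + 1) := by
  rw [qbinom_succ_succ _ b (i + 1), qbinom_succ_succ' (not_isOfFinOrder_sq hq) b i]
  rcases le_or_gt i b with hib | hib
  · have hpow : q ^ ((i + 1) * (2 * k + 3)) * (q ^ 2) ^ (b - i)
        = q ^ (2 * b + 2 * k + 3) * q ^ (i * (2 * k + 1)) := by
      obtain ⟨e, rfl⟩ := Nat.exists_eq_add_of_le hib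
      rw [Nat.add_sub_cancel_left, ← pow_mul, ← pow_add, ← pow_add]
      ring_nf
    linear_combination qbinom (q ^ 2) b i * hpow
  · rw [qbinom_of_lt _ hib]
    ring

theorem neg_pow_sq_mul_pow {q : R} {k i e : ℕ} (h : k + 2 = i + e) :
    (-q) ^ (e ^ 2) * q ^ (i * (2 * k + 3))
      = (-1) ^ k * q ^ ((k + 2) ^ 2) * ((-1) ^ i * q ^ (i ^ 2 - i)) := by
  have hexp : e ^ 2 + i * (2 * k + 3) = (k + 2) ^ 2 + (i ^ 2 - i) := by
    have : i ≤ i ^ 2 := Nat.le_self_pow two_ne_zero i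
    zify [this] at h ⊢
    linear_combination (i - e - (k + 2 : ℤ)) * h
  have hsign : (-1 : R) ^ (e ^ 2) = (-1) ^ (k + i) :=
    neg_one_pow_congr (by rw [Nat.even_pow' two_ne_zero, Nat.even_iff, Nat.even_iff]; omega)
  rw [neg_pow, mul_assoc, ← pow_add, hexp, hsign, pow_add, pow_add]
  ring

theorem mainSum_add_two {q : K} (hq : ¬IsOfFinOrder q) (b k : ℕ) :
    mainSum q b (k + 2) - (1 - q ^ (2 * k + 3)) * mainSum q b (k + 1)
        - q ^ (2 * b + 2 * k + 3) * mainSum q b k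
      = 2 * (-1) ^ k * q ^ ((k + 2) ^ 2) * altSum q b (k + 2)
        + q ^ ((k + 1) * (2 * k + 3)) * qbinom (q ^ 2) (b + 1) (k + 1) := by
  have hconv := sum_range_add_two_sub_of_coeff (thetaSum q)
    (fun i => q ^ (i * (2 * (k + 2) + 1)) * qbinom (q ^ 2) b i)
    (fun i => q ^ (i * (2 * (k + 1) + 1)) * qbinom (q ^ 2) b i)
    (fun i => q ^ (i * (2 * k + 1)) * qbinom (q ^ 2) b i)
    (fun i => q ^ (i * (2 * k + 3)) * qbinom (q ^ 2) (b + 1) i)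
    (1 - q ^ (2 * k + 3)) (q ^ (2 * b + 2 * k + 3)) k (by simp)
    (by simp only [qbinom_zero_right, qbinom_succ_succ _ b 0]; ring)
    (pow_mul_qbinom_add_two hq b k)
  have hlayer : ∑ i ∈ range (k + 1 + 1),
        q ^ (i * (2 * k + 3)) * qbinom (q ^ 2) (b + 1) i * (-q) ^ ((k + 1 + 1 - i) ^ 2)
      = (-1) ^ k * q ^ ((k + 2) ^ 2) * altSum q b (k + 2) := by
    rw [altSum, mul_sum]
    refine sum_congr rfl fun i hi => ?_
    have hik : k + 2 = i + (k + 1 + 1 - i) := by rw [mem_range] at hi; omega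
    linear_combination qbinom (q ^ 2) (b + 1) i * neg_pow_sq_mul_pow (q := q) hik
  have htel := sum_mul_thetaSum_succ_sub q
    (fun i => q ^ (i * (2 * k + 3)) * qbinom (q ^ 2) (b + 1) i) (k + 1)
  rw [hlayer] at htel
  unfold mainSum
  linear_combination hconv + htel

end MainSum

section TailSum

variable {R : Type*} [CommRing R] {K : Type*} [Field K]

/-- The value `(q;q)_b` at `k = 0` is the one for which `pow_mul_tailSum_succ` also holds at
`k = 0`. -/
def tailSum (q : R) (b : ℕ) : ℕ → R
  | 0 => qPoch q q b
  | k + 1 => ∑ i ∈ range b, qPoch q q i * q ^ (2 * (k + 1) * i) * qbinom (q ^ 2) (b - 1 - i) k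

@[simp] theorem tailSum_zero (q : R) (b : ℕ) : tailSum q b 0 = qPoch q q b := rfl

@[simp] theorem tailSum_zero_succ (q : R) (k : ℕ) : tailSum q 0 (k + 1) = 0 := by
  simp [tailSum]

theorem tailSum_one (q : R) (b : ℕ) :
    tailSum q b 1 = ∑ i ∈ range b, qPoch q q i * q ^ (2 * i) := by
  simp [tailSum]

theorem pow_three_mul_tailSum_one (q : R) (b : ℕ) :
    q ^ 3 * tailSum q b 1 + 1 - 2 * q = (1 - q - q ^ (b + 1)) * qPoch q q b := by
  induction b with
  | zero => simp only [tailSum_one, qPoch, range_zero, sum_empty, prod_empty]; ring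
  | succ b ih =>
    rw [tailSum_one] at ih ⊢
    rw [sum_range_succ, qPoch_self_succ]
    linear_combination ih

theorem pow_mul_tailSum_succ {q : K} (hq : ¬IsOfFinOrder q) (b k : ℕ) :
    q ^ (2 * (k + 1)) * tailSum q (b + 1) (k + 1)
      = q ^ (2 * (k + 1)) * tailSum q b (k + 1) + q ^ (2 * b + 2) * tailSum q b k := by
  rcases k with _ | k
  · rw [tailSum_one, tailSum_one, sum_range_succ, tailSum]
    ring
  simp only [tailSum]
  rw [sum_range_succ, Nat.add_sub_cancel, Nat.sub_self, qbinom_of_lt _ k.succ_pos, mul_zero,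
    add_zero, mul_sum, mul_sum, mul_sum, ← sum_add_distrib]
  refine sum_congr rfl fun i hi => ?_
  rw [show b - i = b - 1 - i + 1 by rw [mem_range] at hi; omega,
    qbinom_succ_succ' (not_isOfFinOrder_sq hq)]
  rcases le_or_gt k (b - 1 - i) with hk | hk
  · have hpow : q ^ (2 * (k + 1 + 1)) * q ^ (2 * (k + 1 + 1) * i) * (q ^ 2) ^ (b - 1 - i - k)
        = q ^ (2 * b + 2) * q ^ (2 * (k + 1) * i) := by
      rw [← pow_mul, ← pow_add, ← pow_add, ← pow_add]
      congr 1
      rw [mem_range] at hi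
      zify [hk, (by omega : 1 ≤ b), (by omega : i ≤ b - 1)]
      ring
    linear_combination qPoch q q i * qbinom (q ^ 2) (b - 1 - i) k * hpow
  · rw [qbinom_of_lt _ hk]
    ring

end TailSum

section AltSum

variable {R : Type*} [CommRing R] {K : Type*} [Field K]

@[simp] theorem altSum_one (q : R) (b : ℕ) : altSum q b 1 = 1 := by simp [altSum]

theorem altSum_zero_left (q : R) (k : ℕ) : altSum q 0 (k + 2) = 0 := by
  induction k with
  | zero => simp [altSum, sum_range_succ]
  | succ k ih =>
    rw [altSum, sum_range_succ, ← altSum, ih, qbinom_of_lt _ (by omega), mul_zero, add_zero]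

theorem altSum_succ {q : K} (hq : ¬IsOfFinOrder q) (b k : ℕ) :
    altSum q (b + 1) (k + 1) = altSum q b (k + 1) - q ^ (2 * b + 2) * altSum q b k := by
  unfold altSum
  rw [sum_range_succ', sum_range_succ' _ k, mul_sum, eq_sub_iff_add_eq, add_right_comm,
    ← sum_add_distrib]
  simp only [qbinom_zero_right]
  congr 1
  refine sum_congr rfl fun j _ => ?_
  rw [qbinom_succ_succ' (not_isOfFinOrder_sq hq)]
  rcases le_or_gt j (b + 1) with hj | hj
  · have hpow : q ^ ((j + 1) ^ 2 - (j + 1)) * (q ^ 2) ^ (b + 1 - j)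
        = q ^ (2 * b + 2) * q ^ (j ^ 2 - j) := by
      rw [← pow_mul, ← pow_add, ← pow_add]
      congr 1
      have : j ≤ j ^ 2 := Nat.le_self_pow two_ne_zero j
      have : j + 1 ≤ (j + 1) ^ 2 := Nat.le_self_pow two_ne_zero (j + 1)
      zify [*]
      ring
    linear_combination (-1) ^ (j + 1) * qbinom (q ^ 2) (b + 1) j * hpow
  · rw [qbinom_of_lt _ hj]
    ring

end AltSum

section Defect

variable {R : Type*} [CommRing R] {K : Type*} [Field K]

/-- By `mainSum_add_two`, `q ^ (k ^ 2 + k) * defect q b k` is the amount by which the numerator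
`mainSum + q ^ (k * (2 * k + 1)) * tailSum` of `rhs` fails the recurrence `T_add_two`. -/
def defect (q : R) (b k : ℕ) : R :=
  q ^ (k ^ 2 + 8 * k + 10) * tailSum q b (k + 2)
    - (1 - q ^ (2 * k + 3)) * q ^ (k ^ 2 + 4 * k + 3) * tailSum q b (k + 1)
    - q ^ (k ^ 2 + 2 * k + 2 * b + 3) * tailSum q b k
    + q ^ (k ^ 2 + 4 * k + 3) * qbinom (q ^ 2) (b + 1) (k + 1)
    + 2 * (-1) ^ k * q ^ (3 * k + 4) * altSum q b (k + 2)

theorem defect_zero_left (q : R) (k : ℕ) : defect q 0 k = 0 := by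
  rcases k with _ | k
  · simp [defect, tailSum, qPoch, altSum_zero_left]
  · simp [defect, qbinom_of_lt, altSum_zero_left]

theorem defect_zero_right {q : K} (hq : ¬IsOfFinOrder q) (b : ℕ) : defect q b 0 = 0 := by
  induction b with
  | zero => exact defect_zero_left q 0
  | succ b ih =>
    have hU₂ := pow_mul_tailSum_succ hq b 1
    have hU₁ := pow_mul_tailSum_succ hq b 0
    have hC := qbinom_succ_succ' (not_isOfFinOrder_sq hq) (b + 1) 0
    have hW := altSum_succ hq b 1
    have hZ := pow_three_mul_tailSum_one q b
    rw [altSum_one, mul_one] at hW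
    rw [qbinom_zero_right, mul_one, Nat.sub_zero] at hC
    unfold defect at ih ⊢
    rw [tailSum_zero] at hU₁ ih ⊢
    rw [qPoch_self_succ]
    linear_combination ih + q ^ 6 * hU₂ - (1 - q ^ 3) * q * hU₁ + q ^ 3 * hC + 2 * q ^ 4 * hW
      + q ^ (2 * b + 5) * hZ

theorem pow_mul_defect_succ {q : K} (hq : ¬IsOfFinOrder q) (b k : ℕ) :
    q ^ (2 * k + 6) * defect q (b + 1) (k + 1)
      = q ^ (2 * k + 6) * defect q b (k + 1) + q ^ (2 * b + 2 * k + 11) * defect q b k := by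
  have hU₃ := pow_mul_tailSum_succ hq b (k + 2)
  have hU₂ := pow_mul_tailSum_succ hq b (k + 1)
  have hU₁ := pow_mul_tailSum_succ hq b k
  have hW := altSum_succ hq b (k + 2)
  have hC : q ^ (2 * k + 6) * qbinom (q ^ 2) (b + 2) (k + 2)
      = q ^ (2 * k + 6) * qbinom (q ^ 2) (b + 1) (k + 2)
        + q ^ (2 * b + 6) * qbinom (q ^ 2) (b + 1) (k + 1) := by
    rw [qbinom_succ_succ' (not_isOfFinOrder_sq hq)]
    rcases le_or_gt k b with hkb | hkb
    · have hpow : q ^ (2 * k + 6) * (q ^ 2) ^ (b + 1 - (k + 1)) = q ^ (2 * b + 6) := by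
        rw [← pow_mul, ← pow_add]; congr 1; omega
      linear_combination qbinom (q ^ 2) (b + 1) (k + 1) * hpow
    · rw [qbinom_of_lt _ (by omega : b + 1 < k + 1)]
      ring
  unfold defect
  linear_combination q ^ (k ^ 2 + 10 * k + 19) * hU₃
    - (1 - q ^ (2 * k + 5)) * q ^ (k ^ 2 + 6 * k + 10) * hU₂
    - q ^ (k ^ 2 + 4 * k + 2 * b + 12) * hU₁
    + q ^ (k ^ 2 + 6 * k + 8) * hC
    + 2 * (-1) ^ (k + 1) * q ^ (5 * k + 13) * hW

theorem defect_eq_zero {q : K} (hq₀ : q ≠ 0) (hq : ¬IsOfFinOrder q) (b k : ℕ) :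
    defect q b k = 0 := by
  induction b generalizing k with
  | zero => exact defect_zero_left q k
  | succ b ih =>
    rcases k with _ | k
    · exact defect_zero_right hq (b + 1)
    · have h := pow_mul_defect_succ hq b k
      rw [ih, ih, mul_zero, mul_zero, add_zero] at h
      exact (mul_eq_zero.mp h).resolve_left (pow_ne_zero _ hq₀)

end Defect

section RightHandSide

variable {K : Type*} [Field K]

noncomputable def rhs (q : K) (b k : ℕ) : K :=
  (mainSum q b k + q ^ (k * (2 * k + 1)) * tailSum q b k) / qPoch q q b

theorem rhs_add_two {q : K} (hq₀ : q ≠ 0) (hq : ¬IsOfFinOrder q) (b k : ℕ) :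
    rhs q b (k + 2)
      = (1 - q ^ (2 * k + 3)) * rhs q b (k + 1) + (q ^ b) ^ 2 * q ^ (2 * k + 3) * rhs q b k := by
  have hD := defect_eq_zero hq₀ hq b k
  unfold defect at hD
  simp only [rhs, div_eq_mul_inv]
  linear_combination (qPoch q q b)⁻¹ * (mainSum_add_two hq b k + q ^ (k ^ 2 + k) * hD)

theorem rhs_zero {q : K} (hq : ¬IsOfFinOrder q) (b : ℕ) : rhs q b 0 = 1 := by
  simp [rhs, mainSum, qPoch_self_ne_zero hq]

theorem rhs_one {q : K} (hq : ¬IsOfFinOrder q) (b : ℕ) :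
    rhs q b 1 = 1 + (1 + q ^ b) * (-q) := by
  have hmain : mainSum q b 1 = 1 - 2 * q := by
    simp only [mainSum, sum_range_one, qbinom_zero_right, Nat.sub_zero, thetaSum_succ q 0,
      thetaSum_zero]
    ring
  rw [rhs, hmain, div_eq_iff (qPoch_self_ne_zero hq b)]
  linear_combination pow_three_mul_tailSum_one q b

theorem T_pow_eq_rhs {q : K} (hq₀ : q ≠ 0) (hq : ¬IsOfFinOrder q) (b k : ℕ) :
    T (q ^ b) q k = rhs q b k := by
  induction k using Nat.twoStepInduction with
  | zero => rw [rhs_zero hq, T_zero]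
  | one => simp [rhs_one hq, T_succ]
  | more k ih₀ ih₁ => rw [T_add_two, rhs_add_two hq₀ hq, ih₀, ih₁]

theorem rhs_eq_sum {q : K} (hq : ¬IsOfFinOrder q) (b : ℕ) {k : ℕ} (hk : 1 ≤ k) :
    rhs q b k =
      (∑ i ∈ range k,
        q ^ (i * (2 * k + 1)) / qPoch q q b * gauss (q ^ 2) (b : ℤ) (i : ℤ) *
          ∑ j ∈ Icc (-((k : ℤ) - i)) ((k : ℤ) - i), (-q) ^ (j ^ 2).toNat)
      + ∑ i ∈ range b,
          qPoch q q i / qPoch q q b * q ^ (k * (2 * k + 2 * i + 1)) *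
            gauss (q ^ 2) ((b : ℤ) - i - 1) ((k : ℤ) - 1) := by
  obtain ⟨k, rfl⟩ := Nat.exists_eq_add_of_le' hk
  rw [rhs, add_div, mainSum, tailSum, sum_div, mul_sum, sum_div]
  congr 1 <;> refine sum_congr rfl fun i hi => ?_ <;> simp only [mem_range] at hi
  · rw [show ((k + 1 : ℕ) : ℤ) - i = ((k + 1 - i : ℕ) : ℤ) by omega,
      gauss_natCast (not_isOfFinOrder_sq hq), thetaSum]
    ring
  · rw [show (b : ℤ) - i - 1 = ((b - 1 - i : ℕ) : ℤ) by omega,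
      show ((k + 1 : ℕ) : ℤ) - 1 = (k : ℤ) by omega, gauss_natCast (not_isOfFinOrder_sq hq),
      show (k + 1) * (2 * (k + 1) + 2 * i + 1) = (k + 1) * (2 * (k + 1) + 1) + 2 * (k + 1) * i
        by ring, pow_add]
    ring

end RightHandSide

theorem RatFunc.not_isOfFinOrder_X {F : Type*} [Field F] :
    ¬IsOfFinOrder (RatFunc.X : RatFunc F) := by
  intro h
  obtain ⟨n, hn, h⟩ := isOfFinOrder_iff_pow_eq_one.mp h
  have hpoly : (Polynomial.X ^ n : Polynomial F) = 1 :=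
    RatFunc.algebraMap_injective F (by simpa [RatFunc.algebraMap_X] using h)
  simpa [hn.ne'] using congrArg Polynomial.natDegree hpoly

theorem stmt_4 (b k : ℕ) (hk : 1 ≤ k) :
    T (Xq^b) Xq k =
      (∑ i ∈ Finset.range k,
        Xq^(i*(2*k+1)) / qPoch Xq Xq b * gauss (Xq^2) (b:ℤ) (i:ℤ) *
          ∑ j ∈ Finset.Icc (-((k:ℤ) - i)) ((k:ℤ) - i), (-Xq) ^ (j^2).toNat)
      + ∑ i ∈ Finset.range b,
          qPoch Xq Xq i / qPoch Xq Xq b * Xq^(k*(2*k+2*i+1)) *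
            gauss (Xq^2) ((b:ℤ) - i - 1) ((k:ℤ) - 1) := by
  rw [T_pow_eq_rhs (q := Xq) RatFunc.X_ne_zero RatFunc.not_isOfFinOrder_X,
    rhs_eq_sum (q := Xq) RatFunc.not_isOfFinOrder_X b hk]
end

section
/- Let q be an element of a commutative ring. For every integer n ≥ 0, Ẽ_n(0, q) = Σ_{k=0}^{n} (binom(2n, n−k) − binom(2n, n−k−1)) · (−1)^k · q^{k(k+1)/2}, where binom denotes the ordinary binomial coefficient (with binom(2n, m) = 0 for m < 0). (This is the Touchard–Riordan formula: Ẽ_n(0,q) equals (1−q)^n times the nth coefficient d_n of the S-fraction with coefficients [n]_q.) -/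
open Finset

lemma binom_of_neg (n : ℕ) {j : ℤ} (hj : j < 0) : binom n j = 0 := by
  simp [binom, not_le.mpr hj]

lemma binom_succ (n : ℕ) (j : ℤ) : binom (n + 1) j = binom n j + binom n (j - 1) := by
  rcases j with (_ | j) | j
  · simp [binom]
  · simp [binom, Nat.choose_succ_succ', add_comm, show (0 : ℤ) ≤ j + 1 by omega]
  · simp [binom_of_neg, Int.negSucc_lt_zero]

def ballot (n : ℕ) (j : ℤ) : ℤ := binom n j - binom n (j - 1)

lemma ballot_of_neg (n : ℕ) {j : ℤ} (hj : j < 0) : ballot n j = 0 := by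
  simp [ballot, binom_of_neg n hj, binom_of_neg n (show j - 1 < 0 by omega)]

lemma ballot_succ (n : ℕ) (j : ℤ) : ballot (n + 1) j = ballot n j + ballot n (j - 1) := by
  simp only [ballot, binom_succ]
  ring

lemma ballot_half (m : ℕ) : ballot (2 * m + 1) (m + 1) = 0 := by
  simp [ballot, binom, Nat.choose_symm_half, show (0 : ℤ) ≤ m + 1 by omega]

lemma succ_mul_succ_succ_div_two (k : ℕ) :
    (k + 1) * (k + 1 + 1) / 2 = k * (k + 1) / 2 + (k + 1) := by
  rw [show (k + 1) * (k + 1 + 1) = k * (k + 1) + 2 * (k + 1) by ring,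
    Nat.add_mul_div_left _ _ two_pos]

section Touchard

variable {R : Type*} [CommRing R]

def touchardCoeff (q : R) (h k : ℕ) : R :=
  (-1) ^ k * q ^ (k * (k + 1) / 2) * qPoch (q ^ (k + 1)) q h

lemma qPoch_succ (a q : R) (h : ℕ) : qPoch a q (h + 1) = qPoch a q h * (1 - a * q ^ h) :=
  prod_range_succ _ _

lemma qPoch_succ' (a q : R) (h : ℕ) : qPoch a q (h + 1) = (1 - a) * qPoch (a * q) q h := by
  simp only [qPoch, prod_range_succ', pow_zero, mul_one, pow_succ, mul_assoc, mul_comm]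

lemma touchardCoeff_zero_add (q : R) (k : ℕ) :
    touchardCoeff q 0 (k + 1) + touchardCoeff q 0 k = touchardCoeff q 1 k := by
  simp only [touchardCoeff, qPoch, succ_mul_succ_succ_div_two, range_zero, prod_empty, range_one,
    prod_singleton, pow_add]
  ring

lemma touchardCoeff_succ_add (q : R) (h k : ℕ) :
    touchardCoeff q (h + 1) (k + 1) + touchardCoeff q (h + 1) k =
      (1 - q ^ (h + 1)) * touchardCoeff q h (k + 1) + touchardCoeff q (h + 2) k := by
  have hP : qPoch (q ^ (k + 1)) q (h + 1) = (1 - q ^ (k + 1)) * qPoch (q ^ (k + 2)) q h := by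
    rw [qPoch_succ', ← pow_succ]
  have hP' : qPoch (q ^ (k + 1)) q (h + 2) =
      (1 - q ^ (k + 1)) * (qPoch (q ^ (k + 2)) q h * (1 - q ^ (k + 2) * q ^ h)) := by
    rw [qPoch_succ', ← pow_succ, qPoch_succ]
  simp only [touchardCoeff, hP, hP', show k + 1 + 1 = k + 2 by rfl, succ_mul_succ_succ_div_two,
    qPoch_succ (q ^ (k + 2))]
  simp only [pow_add, pow_succ]
  ring

lemma touchardCoeff_succ_zero (q : R) (h : ℕ) :
    touchardCoeff q (h + 1) 0 = (1 - q ^ (h + 1)) * touchardCoeff q h 0 := by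
  simp only [touchardCoeff, qPoch_succ, pow_succ]
  ring

lemma f_eq_zero_of_lt (t q : R) {n h : ℕ} (hnh : n < h) : f t q n h = 0 := by
  induction n generalizing h with
  | zero => simp [f, hnh.ne']
  | succ n ih =>
    obtain ⟨h, rfl⟩ : ∃ h', h = h' + 1 := ⟨h - 1, by omega⟩
    simp [f, ih (show n < h by omega), ih (show n < h + 2 by omega)]

lemma sum_mul_add_shift (a : ℕ → R) (b : ℤ → R) (hb : b (-1) = 0) (m : ℕ) :
    ∑ k ∈ range (m + 1), a k * (b (m - k) + b (m - k - 1)) =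
      a 0 * b m + ∑ k ∈ range m, (a (k + 1) + a k) * b (m - 1 - k) := by
  have hshift : ∀ k : ℕ, (m : ℤ) - (k + 1 : ℕ) = m - 1 - k := fun k => by push_cast; ring
  simp only [mul_add, add_mul, sum_add_distrib]
  rw [sum_range_succ' (fun k => a k * b (m - k)), sum_range_succ (fun k => a k * b (m - k - 1))]
  simp only [hshift, sub_self, zero_sub, hb, mul_zero, add_zero,
    Nat.cast_zero, sub_zero, sub_right_comm (m : ℤ) 1]
  ring

theorem f_zero_eq_sum_ballot (q : R) (n h m : ℕ) (hn : n = 2 * m + h) :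
    f 0 q n h = ∑ k ∈ range (m + 1), touchardCoeff q h k * ballot n (m - k) := by
  induction n generalizing h m with
  | zero =>
    obtain ⟨rfl, rfl⟩ : h = 0 ∧ m = 0 := by omega
    simp [f, touchardCoeff, qPoch, ballot, binom]
  | succ n ih =>
    simp only [ballot_succ, Int.cast_add]
    cases h with
    | zero =>
      obtain ⟨m, rfl⟩ : ∃ m', m = m' + 1 := ⟨m - 1, by omega⟩
      have hf : f 0 q (n + 1) 0 = f 0 q n 1 := by simp [f]
      obtain rfl : n = 2 * m + 1 := by omega
      rw [hf, ih 1 m rfl, sum_mul_add_shift _ (fun j => (ballot (2 * m + 1) j : R))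
        (by simp [ballot_of_neg])]
      push_cast
      simp only [ballot_half, Int.cast_zero, mul_zero, zero_add, touchardCoeff_zero_add,
        add_sub_cancel_right]
    | succ h =>
      obtain rfl : n = 2 * m + h := by omega
      have hf : f 0 q (2 * m + h + 1) (h + 1) =
          (1 - q ^ (h + 1)) * f 0 q (2 * m + h) h + f 0 q (2 * m + h) (h + 2) := by
        simp [f]
      have hfar : f 0 q (2 * m + h) (h + 2) =
          ∑ k ∈ range m, touchardCoeff q (h + 2) k * ballot (2 * m + h) (m - 1 - k) := by
        cases m with
        | zero => simp [f_eq_zero_of_lt]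
        | succ m =>
          rw [ih (h + 2) m (by ring)]
          push_cast
          simp only [add_sub_cancel_right]
      rw [hf, ih h m rfl, hfar, sum_mul_add_shift _ (fun j => (ballot (2 * m + h) j : R))
        (by simp [ballot_of_neg]), sum_range_succ' _ m, touchardCoeff_succ_zero]
      simp only [touchardCoeff_succ_add, add_mul, sum_add_distrib, mul_add, mul_sum]
      push_cast
      simp only [sub_add_eq_sub_sub, sub_right_comm (m : ℤ) 1, sub_zero, mul_assoc]
      ring

end Touchard

theorem stmt_17 {R : Type*} [CommRing R] (q : R) (n : ℕ) :
    Etilde 0 q n = ∑ k ∈ Finset.range (n+1),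
      (((binom (2*n) ((n:ℤ) - k) - binom (2*n) ((n:ℤ) - k - 1) : ℤ) : R)) *
        (-1)^k * q^(k*(k+1)/2) := by
  rw [Etilde, f_zero_eq_sum_ballot q (2 * n) 0 n (by ring)]
  refine sum_congr rfl fun k _ => ?_
  simp only [touchardCoeff, qPoch, range_zero, prod_empty, mul_one, ballot]
  ring
end
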